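/- Let f(n) = 2^{s₂(n)} be the number of odd entries in the n-th row of Pascal's triangle. Then lim_{n→∞} ln(Var(f(N)))/ln(n) = ln(5/2)/ln(2), where Var(f(N)) = (1/n)∑_{k=0}^{n−1} f(k)² − ((1/n)∑_{k=0}^{n−1} f(k))². -/

import Mathlib

/-!
Write `S_x(n) = ∑_{k<n} x^{s₂(k)}`. Splitting `k < 2n` by parity gives `S_x(2n) = (1 + x) S_x(n)`,
so `S_x(2^m) = (1 + x)^m`, and monotonicity in `n` then gives `S_x(n) ≍ n^{log₂(1+x)}` for `x ≥ 0`.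
The variance is `S_4(n)/n − (S_2(n)/n)²`: the first term is `≍ n^{log₂ 5 − 1}`, while the second is
`O(n^{2 log₂ 3 − 2})`, of strictly lower order because `9 < 10`. Hence `Var ≍ n^{log₂(5/2)}`.
-/

open Finset Filter Real Topology

lemma Nat.digits_sum_add_mul {b r : ℕ} (hb : 1 < b) (hr : r < b) (k : ℕ) :
    (Nat.digits b (r + b * k)).sum = r + (Nat.digits b k).sum := by
  by_cases h : r = 0 ∧ k = 0
  · simp [h.1, h.2]
  · rw [Nat.digits_add b hb r k hr (by tauto), List.sum_cons]

section DigitPowSum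

variable {R : Type*} [CommSemiring R]

noncomputable def digitPowSum (x : R) (n : ℕ) : R := ∑ k ∈ range n, x ^ (Nat.digits 2 k).sum

lemma digitPowSum_two_mul (x : R) (n : ℕ) :
    digitPowSum x (2 * n) = (1 + x) * digitPowSum x n := by
  have h_even : ∀ k, (Nat.digits 2 (2 * k)).sum = (Nat.digits 2 k).sum := fun k => by
    simpa using Nat.digits_sum_add_mul one_lt_two two_pos k
  have h_odd : ∀ k, (Nat.digits 2 (2 * k + 1)).sum = 1 + (Nat.digits 2 k).sum := fun k => by
    simpa [add_comm] using Nat.digits_sum_add_mul one_lt_two one_lt_two k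
  induction n with
  | zero => simp [digitPowSum]
  | succ n ih =>
    simp only [digitPowSum] at ih ⊢
    rw [mul_add_one, sum_range_succ, sum_range_succ, ih, h_odd, h_even, sum_range_succ,
      pow_add]
    ring

lemma digitPowSum_two_pow (x : R) (m : ℕ) : digitPowSum x (2 ^ m) = (1 + x) ^ m := by
  induction m with
  | zero => simp [digitPowSum]
  | succ m ih => rw [pow_succ', digitPowSum_two_mul, ih, pow_succ']

end DigitPowSum

lemma digitPowSum_mono {x : ℝ} (hx : 0 ≤ x) : Monotone (digitPowSum x) := fun _ _ h =>
  sum_le_sum_of_subset_of_nonneg (range_subset_range.2 h) fun _ _ _ => by positivity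

lemma two_pow_rpow_logb {c : ℝ} (hc : 0 < c) (m : ℕ) : ((2 : ℝ) ^ m) ^ logb 2 c = c ^ m := by
  rw [← rpow_natCast_mul zero_le_two, mul_comm, rpow_mul_natCast zero_le_two,
    rpow_logb two_pos (by norm_num) hc]

section GrowthOfMonotone

variable {f : ℕ → ℝ} {c : ℝ}

lemma Monotone.le_mul_rpow_logb_of_two_pow (hf : Monotone f) (hc : 1 ≤ c)
    (hpow : ∀ m, f (2 ^ m) = c ^ m) {n : ℕ} (hn : n ≠ 0) :
    f n ≤ c * (n : ℝ) ^ logb 2 c := by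
  set m := Nat.log 2 n
  have hm : (2 : ℝ) ^ m ≤ n := by exact_mod_cast Nat.pow_log_le_self 2 hn
  calc f n ≤ f (2 ^ (m + 1)) := hf (Nat.lt_pow_succ_log_self one_lt_two n).le
    _ = c * ((2 : ℝ) ^ m) ^ logb 2 c := by
      rw [hpow, two_pow_rpow_logb (by linarith), pow_succ']
    _ ≤ c * (n : ℝ) ^ logb 2 c := by
      gcongr
      exact logb_nonneg one_lt_two hc

lemma Monotone.rpow_logb_le_mul_of_two_pow (hf : Monotone f) (hc : 1 ≤ c)
    (hpow : ∀ m, f (2 ^ m) = c ^ m) {n : ℕ} (hn : n ≠ 0) :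
    (n : ℝ) ^ logb 2 c ≤ c * f n := by
  set m := Nat.log 2 n
  have hm : (n : ℝ) ≤ (2 : ℝ) ^ (m + 1) := by
    exact_mod_cast (Nat.lt_pow_succ_log_self one_lt_two n).le
  calc (n : ℝ) ^ logb 2 c ≤ ((2 : ℝ) ^ (m + 1)) ^ logb 2 c := by
        gcongr
        exact logb_nonneg one_lt_two hc
    _ = c * f (2 ^ m) := by rw [two_pow_rpow_logb (by linarith), hpow, pow_succ']
    _ ≤ c * f n := mul_le_mul_of_nonneg_left (hf (Nat.pow_log_le_self 2 hn)) (by linarith)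

end GrowthOfMonotone

lemma eventually_const_mul_rpow_le_rpow {p q : ℝ} (hpq : p < q) (C : ℝ) :
    ∀ᶠ n : ℕ in atTop, C * (n : ℝ) ^ p ≤ (n : ℝ) ^ q := by
  have hgap := (tendsto_rpow_atTop (sub_pos.2 hpq)).comp tendsto_natCast_atTop_atTop
  filter_upwards [hgap.eventually_ge_atTop C, eventually_gt_atTop 0] with n hC hn
  rw [← sub_add_cancel q p, rpow_add (by exact_mod_cast hn)]
  exact mul_le_mul_of_nonneg_right hC (by positivity)

lemma tendsto_log_div_log_of_rpow_bounds {u : ℕ → ℝ} {a b c : ℝ} (ha : 0 < a) (hb : 0 < b)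
    (hu : ∀ᶠ n : ℕ in atTop, a * (n : ℝ) ^ c ≤ u n ∧ u n ≤ b * (n : ℝ) ^ c) :
    Tendsto (fun n => log (u n) / log n) atTop (𝓝 c) := by
  have hlog : Tendsto (fun n : ℕ => log (n : ℝ)) atTop atTop :=
    tendsto_log_atTop.comp tendsto_natCast_atTop_atTop
  have hlim (d : ℝ) : Tendsto (fun n : ℕ => log d / log n + c) atTop (𝓝 c) := by
    simpa using (tendsto_const_nhds.div_atTop hlog).add_const c
  have hlog_mul_rpow {d : ℝ} (hd : 0 < d) {n : ℕ} (hn : 1 < n) :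
      log (d * (n : ℝ) ^ c) / log n = log d / log n + c := by
    have hn' : (1 : ℝ) < n := by exact_mod_cast hn
    have : 0 < log (n : ℝ) := log_pos hn'
    rw [log_mul hd.ne' (by positivity), log_rpow (by linarith)]
    field_simp
  refine tendsto_of_tendsto_of_tendsto_of_le_of_le' (hlim a) (hlim b) ?_ ?_
  · filter_upwards [hu, eventually_gt_atTop 1] with n ⟨hlo, _⟩ hn
    rw [← hlog_mul_rpow ha hn]
    exact div_le_div_of_nonneg_right (log_le_log (by positivity) hlo)
      (log_nonneg (by exact_mod_cast hn.le))
  · filter_upwards [hu, eventually_gt_atTop 1] with n ⟨hlo, hhi⟩ hn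
    rw [← hlog_mul_rpow hb hn]
    exact div_le_div_of_nonneg_right (log_le_log ((by positivity : 0 < a * _).trans_le hlo) hhi)
      (log_nonneg (by exact_mod_cast hn.le))

lemma two_mul_logb_three_sub_one_lt : 2 * (logb 2 3 - 1) < logb 2 5 - 1 := by
  have h9 : logb 2 9 = 2 * logb 2 3 := by
    rw [show (9 : ℝ) = 3 ^ 2 by norm_num, logb_pow]
    push_cast
    ring
  have h10 : logb 2 10 = logb 2 5 + 1 := by
    rw [show (10 : ℝ) = 5 * 2 by norm_num, logb_mul (by norm_num) (by norm_num),
      logb_self_eq_one one_lt_two]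
  have := logb_lt_logb one_lt_two (by norm_num : (0 : ℝ) < 9) (by norm_num : (9 : ℝ) < 10)
  linarith

noncomputable def uniformVariance (f : ℕ → ℝ) (n : ℕ) : ℝ :=
  (1 / (n : ℝ)) * ∑ k ∈ range n, f k ^ 2 - ((1 / (n : ℝ)) * ∑ k ∈ range n, f k) ^ 2

noncomputable def oddBinomialCount (k : ℕ) : ℝ := 2 ^ (Nat.digits 2 k).sum

lemma uniformVariance_oddBinomialCount (n : ℕ) :
    uniformVariance oddBinomialCount n =
      (1 / (n : ℝ)) * digitPowSum 4 n - ((1 / (n : ℝ)) * digitPowSum 2 n) ^ 2 := by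
  have hsq (k : ℕ) : oddBinomialCount k ^ 2 = 4 ^ (Nat.digits 2 k).sum := by
    rw [oddBinomialCount, pow_right_comm]
    norm_num
  simp only [uniformVariance, hsq]
  rfl

lemma digitPowSum_four_le {n : ℕ} (hn : n ≠ 0) :
    digitPowSum (4 : ℝ) n ≤ 5 * (n : ℝ) ^ logb 2 5 :=
  (digitPowSum_mono (by norm_num)).le_mul_rpow_logb_of_two_pow (by norm_num)
    (fun m => by rw [digitPowSum_two_pow]; norm_num) hn

lemma rpow_logb_five_le_digitPowSum_four {n : ℕ} (hn : n ≠ 0) :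
    (n : ℝ) ^ logb 2 5 ≤ 5 * digitPowSum (4 : ℝ) n :=
  (digitPowSum_mono (by norm_num)).rpow_logb_le_mul_of_two_pow (by norm_num)
    (fun m => by rw [digitPowSum_two_pow]; norm_num) hn

lemma digitPowSum_two_le {n : ℕ} (hn : n ≠ 0) :
    digitPowSum (2 : ℝ) n ≤ 3 * (n : ℝ) ^ logb 2 3 :=
  (digitPowSum_mono (by norm_num)).le_mul_rpow_logb_of_two_pow (by norm_num)
    (fun m => by rw [digitPowSum_two_pow]; norm_num) hn

lemma uniformVariance_oddBinomialCount_le {n : ℕ} (hn : n ≠ 0) :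
    uniformVariance oddBinomialCount n ≤ 5 * (n : ℝ) ^ (logb 2 5 - 1) := by
  rw [uniformVariance_oddBinomialCount, rpow_sub_one (by exact_mod_cast hn)]
  calc (1 / (n : ℝ)) * digitPowSum 4 n - ((1 / (n : ℝ)) * digitPowSum 2 n) ^ 2
      ≤ (1 / (n : ℝ)) * digitPowSum 4 n := sub_le_self _ (sq_nonneg _)
    _ ≤ (1 / (n : ℝ)) * (5 * (n : ℝ) ^ logb 2 5) := by gcongr; exact digitPowSum_four_le hn
    _ = 5 * ((n : ℝ) ^ logb 2 5 / n) := by ring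

lemma eventually_le_uniformVariance_oddBinomialCount :
    ∀ᶠ n : ℕ in atTop,
      (1 / 10) * (n : ℝ) ^ (logb 2 5 - 1) ≤ uniformVariance oddBinomialCount n := by
  filter_upwards [eventually_const_mul_rpow_le_rpow two_mul_logb_three_sub_one_lt 90,
    eventually_ne_atTop 0] with n hgap hn
  have hn' : (n : ℝ) ≠ 0 := by exact_mod_cast hn
  have hmean : (1 / (n : ℝ)) * digitPowSum 2 n ≤ 3 * (n : ℝ) ^ (logb 2 3 - 1) := by
    rw [rpow_sub_one hn']
    calc (1 / (n : ℝ)) * digitPowSum 2 n ≤ (1 / (n : ℝ)) * (3 * (n : ℝ) ^ logb 2 3) := by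
          gcongr; exact digitPowSum_two_le hn
      _ = 3 * ((n : ℝ) ^ logb 2 3 / n) := by ring
  have hmean_sq :
      ((1 / (n : ℝ)) * digitPowSum 2 n) ^ 2 ≤ 9 * (n : ℝ) ^ (2 * (logb 2 3 - 1)) := by
    calc ((1 / (n : ℝ)) * digitPowSum 2 n) ^ 2 ≤ (3 * (n : ℝ) ^ (logb 2 3 - 1)) ^ 2 := by
          gcongr
          unfold digitPowSum
          positivity
      _ = 9 * (n : ℝ) ^ (2 * (logb 2 3 - 1)) := by
          rw [mul_comm 2, rpow_mul (Nat.cast_nonneg n), rpow_two]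
          ring
  have hsecond : (1 / 5) * (n : ℝ) ^ (logb 2 5 - 1) ≤ (1 / (n : ℝ)) * digitPowSum 4 n := by
    have := rpow_logb_five_le_digitPowSum_four hn
    calc (1 / 5) * (n : ℝ) ^ (logb 2 5 - 1) = (1 / (n : ℝ)) * ((n : ℝ) ^ logb 2 5 / 5) := by
          rw [rpow_sub_one hn']
          ring
      _ ≤ (1 / (n : ℝ)) * digitPowSum 4 n := by gcongr; linarith
  rw [uniformVariance_oddBinomialCount n]
  linarith

theorem binomial_average_dispersion :
    Filter.Tendsto
      (fun n : ℕ =>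
        Real.log
            ((1 / (n : ℝ)) * (∑ k ∈ Finset.range n, ((2 : ℝ) ^ (Nat.digits 2 k).sum) ^ 2)
              - ((1 / (n : ℝ)) * ∑ k ∈ Finset.range n, (2 : ℝ) ^ (Nat.digits 2 k).sum) ^ 2)
          / Real.log n)
      Filter.atTop (nhds (Real.log (5 / 2) / Real.log 2)) := by
  have htarget : log (5 / 2) / log 2 = logb 2 5 - 1 := by
    rw [log_div_log, logb_div (by norm_num) (by norm_num), logb_self_eq_one one_lt_two]
  rw [htarget]
  refine tendsto_log_div_log_of_rpow_bounds (u := uniformVariance oddBinomialCount)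
    (by norm_num : (0 : ℝ) < 1 / 10) (by norm_num : (0 : ℝ) < 5) ?_
  filter_upwards [eventually_le_uniformVariance_oddBinomialCount, eventually_ne_atTop 0]
    with n hlo hn
  exact ⟨hlo, uniformVariance_oddBinomialCount_le hn⟩
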